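/- On ℝ³ with the metric g = ε(e^{2t} dx² + e^{-2t} dy²) + μ dt², the vector field X = (A₁ - (A₃ + 1/μ)x)∂_x + (A₂ + (A₃ - 1/μ)y)∂_y + A₃ ∂_t satisfies the Ricci soliton equation L_X g + ρ = λ g with λ = -2/μ, for any real constants A₁, A₂, A₃. In particular, every three-dimensional proper generalized symmetric space is an expanding or shrinking Ricci soliton (according to the sign of -2/μ). -/
import Mathlib


open Real

noncomputable def pd {n : ℕ} (i : Fin n) (f : (Fin n → ℝ) → ℝ) (p : Fin n → ℝ) : ℝ :=
  fderiv ℝ f p (Pi.single i 1)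

noncomputable def g3 (ε μ : ℝ) (p : Fin 3 → ℝ) : Matrix (Fin 3) (Fin 3) ℝ :=
  Matrix.diagonal ![ε * exp (2 * p 2), ε * exp (-2 * p 2), μ]

/-- Ricci tensor of the 3D generalized symmetric metric: diag(0,0,-2). -/
noncomputable def ρ3 : Matrix (Fin 3) (Fin 3) ℝ := Matrix.diagonal ![0, 0, -2]

/-- Lie derivative of the metric: (L_X g)ᵢⱼ = Xᵏ∂ₖgᵢⱼ + gₖⱼ∂ᵢXᵏ + gᵢₖ∂ⱼXᵏ. -/
noncomputable def lieD {n : ℕ} (g : (Fin n → ℝ) → Matrix (Fin n) (Fin n) ℝ)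
    (X : Fin n → (Fin n → ℝ) → ℝ) (i j : Fin n) (p : Fin n → ℝ) : ℝ :=
  (∑ k, X k p * pd k (fun q => g q i j) p)
    + (∑ k, g p k j * pd i (X k) p) + (∑ k, g p i k * pd j (X k) p)

lemma pd_const {n : ℕ} (i : Fin n) (c : ℝ) (p : Fin n → ℝ) :
    pd i (fun _ => c) p = 0 := by
  simp [pd]

lemma pd_add_lin {n : ℕ} (i j : Fin n) (a b : ℝ) (p : Fin n → ℝ) :
    pd i (fun q => a + b * q j) p = b * (Pi.single i 1 : Fin n → ℝ) j := by
  have h : HasFDerivAt (fun q : Fin n → ℝ => a + b * q j)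
      (b • ContinuousLinearMap.proj j) p :=
    (((ContinuousLinearMap.proj j : (Fin n → ℝ) →L[ℝ] ℝ).hasFDerivAt).const_mul b).const_add a
  simp [pd, h.fderiv]

lemma pd_sub_lin {n : ℕ} (i j : Fin n) (a b : ℝ) (p : Fin n → ℝ) :
    pd i (fun q => a - b * q j) p = -b * (Pi.single i 1 : Fin n → ℝ) j := by
  have := pd_add_lin i j a (-b) p
  simpa [sub_eq_add_neg, neg_mul] using this

lemma pd_cexp (c b : ℝ) (i : Fin 3) (p : Fin 3 → ℝ) :
    pd i (fun q : Fin 3 → ℝ => c * exp (b * q 2)) p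
      = c * b * exp (b * p 2) * (Pi.single i 1 : Fin 3 → ℝ) 2 := by
  have h1 : HasFDerivAt (fun q : Fin 3 → ℝ => b * q 2)
      (b • (ContinuousLinearMap.proj (2:Fin 3) : (Fin 3 → ℝ) →L[ℝ] ℝ)) p :=
    ((ContinuousLinearMap.proj (2:Fin 3) : (Fin 3 → ℝ) →L[ℝ] ℝ).hasFDerivAt).const_mul b
  have h2 := (h1.exp).const_mul c
  simp [pd, h2.fderiv, smul_smul]
  exact Or.inl (by ring)

lemma pd_cexp_neg (c b : ℝ) (i : Fin 3) (p : Fin 3 → ℝ) :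
    pd i (fun q : Fin 3 → ℝ => c * exp (-(b * q 2))) p
      = c * (-b) * exp (-(b * p 2)) * (Pi.single i 1 : Fin 3 → ℝ) 2 := by
  simpa [neg_mul] using pd_cexp c (-b) i p

/-- The vector field X = (A₁-(A₃+1/μ)x)∂_x + (A₂+(A₃-1/μ)y)∂_y + A₃∂_t satisfies
L_X g + ρ = λ g with λ = -2/μ; this λ is nonzero, so the soliton is expanding or
shrinking according to the sign of -2/μ. -/
theorem soliton_3d (ε μ : ℝ) (hε : ε = 1 ∨ ε = -1) (hμ : μ ≠ 0) (A₁ A₂ A₃ : ℝ) :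
    (∀ p : Fin 3 → ℝ, ∀ i j : Fin 3,
      lieD (g3 ε μ)
        ![fun p => A₁ - (A₃ + 1/μ) * p 0,
          fun p => A₂ + (A₃ - 1/μ) * p 1,
          fun _ => A₃] i j p
        + ρ3 i j = (-2/μ) * g3 ε μ p i j) ∧
    (-2/μ < 0 ∨ 0 < -2/μ) := by
  constructor
  · intro p i j
    fin_cases i <;> fin_cases j <;>
      simp [lieD, g3, ρ3, Fin.sum_univ_three, Matrix.diagonal_apply,
        pd_const, pd_add_lin, pd_sub_lin, pd_cexp, pd_cexp_neg, Pi.single_apply] <;>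
      field_simp <;> ring
  · rcases hμ.lt_or_gt with h | h
    · right
      have : (0:ℝ) < -2 / μ := div_pos_of_neg_of_neg (by norm_num) h
      linarith
    · left
      exact div_neg_of_neg_of_pos (by norm_num) h
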